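/- Let X be a T0 space. Then the convergence class S_X equals the class C_X of all pairs of convergent nets and their limits if and only if X is a continuous space (c-space). -/
import Mathlib


namespace Conv

variable {X : Type}

/-- A directed preorder (index of a net), given as an explicit relation. -/
def DirIdx {I : Type} (r : I → I → Prop) : Prop :=
  Nonempty I ∧ (∀ i, r i i) ∧ (∀ a b c : I, r a b → r b c → r a c) ∧
    ∀ a b : I, ∃ c, r a c ∧ r b c

/-- Specialization order relative to a family `T` of "open" sets. -/
def sle (T : Set (Set X)) (x y : X) : Prop := ∀ U ∈ T, x ∈ U → y ∈ U

/-- Upper closure of a set w.r.t. the specialization order of `T`. -/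
def upset (T : Set (Set X)) (A : Set X) : Set X := {z | ∃ a ∈ A, sle T a z}

/-- `D` is a (nonempty) directed subset w.r.t. the specialization order of `T`. -/
def IsDirSet (T : Set (Set X)) (D : Set X) : Prop := D.Nonempty ∧ DirectedOn (sle T) D

/-- A subset `D` (viewed as a monotone net) converges to `x` w.r.t. `T`. -/
def DConv (T : Set (Set X)) (D : Set X) (x : X) : Prop :=
  ∀ U ∈ T, x ∈ U → (D ∩ U).Nonempty

/-- `U` is directed-open w.r.t. `T`. -/
def DirOpen (T : Set (Set X)) (U : Set X) : Prop :=
  ∀ D x, IsDirSet T D → DConv T D x → x ∈ U → (D ∩ U).Nonempty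

/-- The family of directed-open sets. -/
def DTop (T : Set (Set X)) : Set (Set X) := {U | DirOpen T U}

/-- The family of open sets of a topological space. -/
def opens (X : Type) [TopologicalSpace X] : Set (Set X) := {U | IsOpen U}

/-- Every directed-open set belongs to `T`. -/
def DirT (T : Set (Set X)) : Prop := ∀ U, DirOpen T U → U ∈ T

/-- A directed space: every directed-open set is open. -/
def IsDirectedSpace (X : Type) [TopologicalSpace X] : Prop := DirT (opens X)

/-- A net is eventually in `U`. -/
def EvIn {I : Type} (r : I → I → Prop) (xi : I → X) (U : Set X) : Prop :=
  ∃ k, ∀ i, r k i → xi i ∈ U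

/-- `y` is an eventual lower bound of the net `xi`. -/
def EvLB (T : Set (Set X)) {I : Type} (r : I → I → Prop) (xi : I → X) (y : X) : Prop :=
  ∃ k, ∀ i, r k i → sle T y (xi i)

/-- Topological convergence of a net w.r.t. the family `T` of open sets. -/
def NConv (T : Set (Set X)) {I : Type} (r : I → I → Prop) (xi : I → X) (x : X) : Prop :=
  ∀ U ∈ T, x ∈ U → EvIn r xi U

/-- `((x_i), x) ∈ S_X`: some directed set of eventual lower bounds converges to `x`. -/
def SConv (T : Set (Set X)) {I : Type} (r : I → I → Prop) (xi : I → X) (x : X) : Prop :=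
  ∃ D : Set X, IsDirSet T D ∧ (∀ d ∈ D, EvLB T r xi d) ∧ DConv T D x

/-- `U` is open in the topology determined by `S_X`. -/
def SOpen (T : Set (Set X)) (U : Set X) : Prop :=
  ∀ (I : Type) (r : I → I → Prop), DirIdx r → ∀ (xi : I → X) (x : X),
    SConv T r xi x → x ∈ U → EvIn r xi U

/-- `y ≪_d x`. -/
def WayBelow (T : Set (Set X)) (y x : X) : Prop :=
  ∀ D : Set X, IsDirSet T D → DConv T D x → ∃ d ∈ D, sle T y d

/-- A continuous space (relative to the family `T`). -/
def IsContinuousT (T : Set (Set X)) : Prop :=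
  DirT T ∧ ∀ x : X, IsDirSet T {y | WayBelow T y x} ∧ DConv T {y | WayBelow T y x} x

def IsContinuousSpace (X : Type) [TopologicalSpace X] : Prop := IsContinuousT (opens X)

/-- `G ≪_d H` for subsets. -/
def SWayBelow (T : Set (Set X)) (G H : Set X) : Prop :=
  ∀ (D : Set X) (x : X), IsDirSet T D → DConv T D x → x ∈ H → (D ∩ upset T G).Nonempty

/-- A directed family of finite sets (ordered by reverse inclusion of upper closures). -/
def IsDirFam (T : Set (Set X)) (F : Set (Set X)) : Prop :=
  F.Nonempty ∧ (∀ A ∈ F, A.Finite) ∧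
    ∀ A ∈ F, ∀ B ∈ F, ∃ C ∈ F, upset T C ⊆ upset T A ∧ upset T C ⊆ upset T B

/-- Convergence of a family of finite sets to `x`. -/
def FamConv (T : Set (Set X)) (F : Set (Set X)) (x : X) : Prop :=
  ∀ U ∈ T, x ∈ U → ∃ A ∈ F, upset T A ⊆ U

/-- `fin_d(x)`. -/
def finD (T : Set (Set X)) (x : X) : Set (Set X) := {A | A.Finite ∧ SWayBelow T A {x}}

def IsQuasicontinuousT (T : Set (Set X)) : Prop :=
  DirT T ∧ ∀ x : X, IsDirFam T (finD T x) ∧ FamConv T (finD T x) x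

def IsQuasicontinuousSpace (X : Type) [TopologicalSpace X] : Prop :=
  IsQuasicontinuousT (opens X)

/-- `A` is a quasi eventual lower bound of the net `xi`. -/
def QEvLB (T : Set (Set X)) {I : Type} (r : I → I → Prop) (xi : I → X) (A : Set X) : Prop :=
  A.Finite ∧ ∃ k, ∀ i, r k i → xi i ∈ upset T A

/-- `((x_i), x) ∈ S*_X`. -/
def QSConv (T : Set (Set X)) {I : Type} (r : I → I → Prop) (xi : I → X) (x : X) : Prop :=
  ∃ F : Set (Set X), IsDirFam T F ∧ (∀ A ∈ F, QEvLB T r xi A) ∧ FamConv T F x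

/-- `U` is open in the topology determined by `S*_X`. -/
def QSOpen (T : Set (Set X)) (U : Set X) : Prop :=
  ∀ (I : Type) (r : I → I → Prop), DirIdx r → ∀ (xi : I → X) (x : X),
    QSConv T r xi x → x ∈ U → EvIn r xi U

/-- `x ≡ liminf x_i`. -/
def IsLiminf (T : Set (Set X)) {I : Type} (r : I → I → Prop) (xi : I → X) (x : X) : Prop :=
  (∀ y, EvLB T r xi y → sle T y x) ∧
  (∀ z, (∀ y, EvLB T r xi y → sle T y z) → sle T x z) ∧
  SConv T r xi x

/-- `f : (J,s) → (I,r)` is a subnet map: monotone and cofinal, with directed domain. -/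
def Subnet {I J : Type} (r : I → I → Prop) (s : J → J → Prop) (f : J → I) : Prop :=
  DirIdx s ∧ (∀ a b, s a b → r (f a) (f b)) ∧ ∀ i, ∃ j, r i (f j)

/-- `z` is a cofinal lower bound of the net `xi`. -/
def CofLB (T : Set (Set X)) {I : Type} (r : I → I → Prop) (xi : I → X) (z : X) : Prop :=
  ∀ i, ∃ j, r i j ∧ sle T z (xi j)

/-- `((x_i), x) ∈ L_X`: every subnet has liminf `x`. -/
def LConv (T : Set (Set X)) {I : Type} (r : I → I → Prop) (xi : I → X) (x : X) : Prop :=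
  ∀ (J : Type) (s : J → J → Prop) (f : J → I), Subnet r s f →
    IsLiminf T s (fun j => xi (f j)) x

/-- `U` is open in the liminf topology `L(X)`. -/
def LOpen (T : Set (Set X)) (U : Set X) : Prop :=
  ∀ (I : Type) (r : I → I → Prop), DirIdx r → ∀ (xi : I → X) (x : X),
    LConv T r xi x → x ∈ U → EvIn r xi U

/-- `x ≡_q liminf x_i`. -/
def QLiminf (T : Set (Set X)) {I : Type} (r : I → I → Prop) (xi : I → X) (x : X) : Prop :=
  QSConv T r xi x ∧ ∀ y, EvLB T r xi y → sle T y x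

/-- `((x_i), x) ∈ L*_X`: every subnet quasi-liminf converges to `x`. -/
def QLConv (T : Set (Set X)) {I : Type} (r : I → I → Prop) (xi : I → X) (x : X) : Prop :=
  ∀ (J : Type) (s : J → J → Prop) (f : J → I), Subnet r s f →
    QLiminf T s (fun j => xi (f j)) x

/-- `U` is open in the quasi-liminf topology `L*(X)`. -/
def QLOpen (T : Set (Set X)) (U : Set X) : Prop :=
  ∀ (I : Type) (r : I → I → Prop), DirIdx r → ∀ (xi : I → X) (x : X),
    QLConv T r xi x → x ∈ U → EvIn r xi U

/-- The Lawson topology: generated by the opens of `X` and complements of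
principal upper sets. -/
def lawson (X : Type) [TopologicalSpace X] : Set (Set X) :=
  {U | (TopologicalSpace.generateFrom
      (opens X ∪ {V | ∃ y : X, V = {z : X | sle (opens X) y z}ᶜ})).IsOpen U}

section Aux

variable {T : Set (Set X)}

lemma sle_refl' (T : Set (Set X)) (x : X) : sle T x x := fun _ _ h => h

lemma sle_trans' {x y z : X} (h1 : sle T x y) (h2 : sle T y z) : sle T x z :=
  fun U hU hx => h2 U hU (h1 U hU hx)

lemma sconv_nconv {I : Type} {r : I → I → Prop} {xi : I → X} {x : X}
    (h : SConv T r xi x) : NConv T r xi x := by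
  obtain ⟨D, _, hlb, hconv⟩ := h
  intro U hU hx
  obtain ⟨d, hdD, hdU⟩ := hconv U hU hx
  obtain ⟨k, hk⟩ := hlb d hdD
  exact ⟨k, fun i hi => hk i hi U hU hdU⟩

lemma dconv_mono {D : Set X} {x z : X} (h : sle T z x) (hc : DConv T D x) :
    DConv T D z := fun U hU hz => hc U hU (h U hU hz)

lemma wayBelow_sle {y x : X} (h : WayBelow T y x) : sle T y x := by
  obtain ⟨d, hd, hle⟩ := h {x} ⟨⟨x, rfl⟩, fun a ha b hb =>
    ⟨x, rfl, fun U _ hm => ha ▸ hm, fun U _ hm => hb ▸ hm⟩⟩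
    (fun U _ hx => ⟨x, rfl, hx⟩)
  cases hd; exact hle

lemma wayBelow_of_sle_left {y z x : X} (h : sle T y z) (hw : WayBelow T z x) :
    WayBelow T y x := by
  intro D hD hc
  obtain ⟨d, hdD, hle⟩ := hw D hD hc
  exact ⟨d, hdD, sle_trans' h hle⟩

lemma wayBelow_of_sle_right {y z x : X} (hw : WayBelow T y z) (h : sle T z x) :
    WayBelow T y x := fun D hD hc => hw D hD (dconv_mono h hc)

/-- Directed-open sets are upper sets. -/
lemma dirOpen_upper {U : Set X} (hU : DirOpen T U) {u z : X} (hu : u ∈ U)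
    (h : sle T u z) : z ∈ U := by
  obtain ⟨d, hd1, hd2⟩ := hU {z} u
    ⟨⟨z, rfl⟩, fun a ha b hb => ⟨z, rfl, fun V _ hm => ha ▸ hm,
      fun V _ hm => hb ▸ hm⟩⟩
    (fun V hV huV => ⟨z, rfl, h V hV huV⟩) hu
  cases hd1; exact hd2

/-- Interpolation in a continuous space. -/
lemma interpolation (hc : IsContinuousT T) {y x : X} (h : WayBelow T y x) :
    ∃ z, WayBelow T y z ∧ WayBelow T z x := by
  set D' : Set X := {w | ∃ z, WayBelow T w z ∧ WayBelow T z x} with hD'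
  have hdir : IsDirSet T D' := by
    constructor
    · obtain ⟨z, hz⟩ := (hc.2 x).1.1
      obtain ⟨w, hw⟩ := (hc.2 z).1.1
      exact ⟨w, z, hw, hz⟩
    · rintro w1 ⟨z1, hw1, hz1⟩ w2 ⟨z2, hw2, hz2⟩
      obtain ⟨z3, hz3, h13, h23⟩ := (hc.2 x).1.2 z1 hz1 z2 hz2
      have hw1' : WayBelow T w1 z3 := wayBelow_of_sle_right hw1 h13
      have hw2' : WayBelow T w2 z3 := wayBelow_of_sle_right hw2 h23
      obtain ⟨w3, hw3, g1, g2⟩ := (hc.2 z3).1.2 w1 hw1' w2 hw2'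
      exact ⟨w3, ⟨z3, hw3, hz3⟩, g1, g2⟩
  have hconv : DConv T D' x := by
    intro U hU hx
    obtain ⟨z, hz, hzU⟩ := (hc.2 x).2 U hU hx
    obtain ⟨w, hw, hwU⟩ := (hc.2 z).2 U hU hzU
    exact ⟨w, ⟨z, hw, hz⟩, hwU⟩
  obtain ⟨d, ⟨z, hdz, hzx⟩, hyd⟩ := h D' hdir hconv
  exact ⟨z, wayBelow_of_sle_left hyd hdz, hzx⟩

/-- In a continuous space, `↟y` is directed-open, hence in `T`. -/
lemma wayAbove_mem (hc : IsContinuousT T) (y : X) : {z | WayBelow T y z} ∈ T := by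
  apply hc.1
  intro D x hD hDc hx
  obtain ⟨z, hyz, hzx⟩ := interpolation hc hx
  obtain ⟨d, hdD, hzd⟩ := hzx D hD hDc
  exact ⟨d, hdD, wayBelow_of_sle_right hyz hzd⟩

end Aux

/-- In any topological space, a set is open iff every convergent net with limit
in the set is eventually in it; we need the contrapositive direction. -/
lemma open_of_net (X : Type) [TopologicalSpace X] (U : Set X)
    (h : ∀ (I : Type) (r : I → I → Prop), DirIdx r → ∀ (xi : I → X) (x : X),
      NConv (opens X) r xi x → x ∈ U → EvIn r xi U) : IsOpen U := by
  by_contra hU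
  have : ¬ U ⊆ interior U := fun hsub => hU (by
    have : U = interior U := le_antisymm hsub interior_subset
    rw [this]; exact isOpen_interior)
  obtain ⟨x, hxU, hxI⟩ := Set.not_subset.mp this
  -- index: open neighborhoods of x
  let I := {N : Set X // IsOpen N ∧ x ∈ N}
  let r : I → I → Prop := fun N M => M.1 ⊆ N.1
  have hne : ∀ N : I, (N.1 \ U).Nonempty := by
    intro N
    by_contra hcon
    rw [Set.not_nonempty_iff_eq_empty, Set.diff_eq_empty] at hcon
    exact hxI (mem_interior.mpr ⟨N.1, hcon, N.2.1, N.2.2⟩)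
  choose xi hxi using hne
  have hdir : DirIdx r := by
    refine ⟨⟨⟨Set.univ, isOpen_univ, trivial⟩⟩, fun i => subset_rfl,
      fun a b c h1 h2 => h2.trans h1, fun a b =>
        ⟨⟨a.1 ∩ b.1, a.2.1.inter b.2.1, a.2.2, b.2.2⟩,
          Set.inter_subset_left, Set.inter_subset_right⟩⟩
  have hnc : NConv (opens X) r xi x := by
    intro V hV hxV
    exact ⟨⟨V, hV, hxV⟩, fun i hi => Set.mem_of_mem_of_subset (hxi i).1 hi⟩
  obtain ⟨k, hk⟩ := h I r hdir xi x hnc hxU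
  exact (hxi k).2 (hk k subset_rfl)

theorem stmt8 (X : Type) [TopologicalSpace X] [T0Space X] :
    (∀ (I : Type) (r : I → I → Prop), DirIdx r → ∀ (xi : I → X) (x : X),
      SConv (opens X) r xi x ↔ NConv (opens X) r xi x) ↔
    IsContinuousSpace X := by
  constructor
  · intro h
    set T := opens X with hT
    constructor
    · -- every directed-open set is open
      intro U hU
      apply open_of_net
      intro I r hdir xi x hnc hxU
      obtain ⟨D, hD, hlb, hDc⟩ := (h I r hdir xi x).mpr hnc
      obtain ⟨d, hdD, hdU⟩ := hU D x hD hDc hxU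
      obtain ⟨k, hk⟩ := hlb d hdD
      exact ⟨k, fun i hi => dirOpen_upper hU hdU (hk i hi)⟩
    · -- continuity at each point, via the canonical net
      intro x
      let I := {p : X × Set X // IsOpen p.2 ∧ x ∈ p.2 ∧ p.1 ∈ p.2}
      let r : I → I → Prop := fun p q => q.1.2 ⊆ p.1.2
      let xi : I → X := fun p => p.1.1
      have hdir : DirIdx r := by
        refine ⟨⟨⟨(x, Set.univ), isOpen_univ, trivial, trivial⟩⟩, fun i => subset_rfl,
          fun a b c h1 h2 => h2.trans h1, fun a b =>
            ⟨⟨(x, a.1.2 ∩ b.1.2), a.2.1.inter b.2.1, ⟨a.2.2.1, b.2.2.1⟩,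
              a.2.2.1, b.2.2.1⟩, Set.inter_subset_left, Set.inter_subset_right⟩⟩
      have hnc : NConv T r xi x := by
        intro V hV hxV
        exact ⟨⟨(x, V), hV, hxV, hxV⟩, fun i hi => hi i.2.2.2⟩
      obtain ⟨D, hD, hlb, hDc⟩ := (h I r hdir xi x).mpr hnc
      -- every element of D is way below x
      have hsub : D ⊆ {y | WayBelow T y x} := by
        intro d hdD
        obtain ⟨k, hk⟩ := hlb d hdD
        -- d is below every element of the open set k.1.2
        have hbelow : ∀ v ∈ k.1.2, sle T d v := by
          intro v hv
          exact hk ⟨(v, k.1.2), k.2.1, k.2.2.1, hv⟩ subset_rfl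
        intro E hE hEc
        obtain ⟨e, heE, heU⟩ := hEc k.1.2 k.2.1 k.2.2.1
        exact ⟨e, heE, hbelow e heU⟩
      constructor
      · constructor
        · obtain ⟨d, hd⟩ := hD.1
          exact ⟨d, hsub hd⟩
        · intro y1 hy1 y2 hy2
          obtain ⟨d1, hd1, h1⟩ := hy1 D hD hDc
          obtain ⟨d2, hd2, h2⟩ := hy2 D hD hDc
          obtain ⟨d3, hd3, g1, g2⟩ := hD.2 d1 hd1 d2 hd2
          exact ⟨d3, hsub hd3, sle_trans' h1 g1, sle_trans' h2 g2⟩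
      · intro U hU hxU
        obtain ⟨d, hdD, hdU⟩ := hDc U hU hxU
        exact ⟨d, hsub hdD, hdU⟩
  · intro hc I r hdir xi x
    constructor
    · exact sconv_nconv
    · intro hnc
      refine ⟨{y | WayBelow (opens X) y x}, (hc.2 x).1, ?_, (hc.2 x).2⟩
      intro y hy
      obtain ⟨k, hk⟩ := hnc {z | WayBelow (opens X) y z} (wayAbove_mem hc y) hy
      exact ⟨k, fun i hi => wayBelow_sle (hk i hi)⟩

end Conv
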